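/- Let Γ be a finite nonempty set, Δ : Γ → Γ → ℤ a matrix with det Δ ≠ 0, ∂Γ ⊆ Γ and Γ° = Γ \ ∂Γ. Then the real vector space H_ℝ(Γ) = ker(Δ°⊗ℝ) of real-valued harmonic functions on Γ has dimension equal to the cardinality of ∂Γ. -/
import Mathlib


open scoped BigOperators

/-- `Δ° ⊗ ℝ : ℝ^Γ → ℝ^{Γ°}` as an `ℝ`-linear map: the Laplacian followed by
restriction to the interior `Γ° = Γ \ ∂Γ` (here `B` is the boundary `∂Γ`). -/
def lapIntLin {Γ : Type} [Fintype Γ] (Δ : Matrix Γ Γ ℤ) (B : Set Γ) :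
    (Γ → ℝ) →ₗ[ℝ] ({v : Γ // v ∉ B} → ℝ) where
  toFun f v := ∑ w, (Δ v.1 w : ℝ) * f w
  map_add' f g := by funext v; simp [mul_add, Finset.sum_add_distrib]
  map_smul' c f := by
    funext v
    simp only [Pi.smul_apply, smul_eq_mul, RingHom.id_apply, Finset.mul_sum]
    exact Finset.sum_congr rfl fun w _ => by ring

/-- The real vector space `H_ℝ(Γ) = ker(Δ° ⊗ ℝ)` of real-valued harmonic functions
has dimension equal to the cardinality of the boundary `∂Γ = B`. -/
theorem finrank_real_harmonic_eq_card_boundary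
    (Γ : Type) [Fintype Γ] [DecidableEq Γ] [Nonempty Γ]
    (Δ : Matrix Γ Γ ℤ) (B : Set Γ) (hΔ : Δ.det ≠ 0) :
    Module.finrank ℝ (LinearMap.ker (lapIntLin Δ B)) = Nat.card {v : Γ // v ∈ B} := by
  classical
  set ΔR : Matrix Γ Γ ℝ := Δ.map (Int.cast : ℤ → ℝ) with hΔR
  have hdet : IsUnit ΔR := by
    rw [Matrix.isUnit_iff_isUnit_det, isUnit_iff_ne_zero]
    rw [hΔR, show Δ.map (Int.cast : ℤ → ℝ) = (Int.castRingHom ℝ).mapMatrix Δ from rfl,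
      ← RingHom.map_det]
    exact fun h => hΔ (by simpa using h)
  -- lapIntLin is the composition of restriction with mulVecLin ΔR
  have hcomp : lapIntLin Δ B =
      (LinearMap.funLeft ℝ ℝ (Subtype.val : {v : Γ // v ∉ B} → Γ)).comp ΔR.mulVecLin := by
    ext f v
    simp [lapIntLin, Matrix.mulVecLin, Matrix.mulVec, dotProduct, hΔR,
      Pi.single_apply, mul_ite, Finset.sum_ite_eq']
  have hsurj : Function.Surjective (lapIntLin Δ B) := by
    rw [hcomp]
    exact (LinearMap.funLeft_surjective_of_injective ℝ ℝ _ Subtype.val_injective).comp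
      (Matrix.mulVec_surjective_iff_isUnit.2 hdet)
  have hrn := LinearMap.finrank_range_add_finrank_ker (lapIntLin Δ B)
  rw [LinearMap.range_eq_top.2 hsurj, finrank_top] at hrn
  have h1 : Module.finrank ℝ ({v : Γ // v ∉ B} → ℝ) = Fintype.card {v : Γ // v ∉ B} := by
    simp [Module.finrank_pi]
  have h2 : Module.finrank ℝ (Γ → ℝ) = Fintype.card Γ := by simp [Module.finrank_pi]
  rw [h1, h2] at hrn
  have hcard : Fintype.card {v : Γ // v ∉ B} + Fintype.card {v : Γ // v ∈ B}
      = Fintype.card Γ := by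
    have h := Fintype.card_subtype_compl (fun v : Γ => v ∈ B)
    have h2 : Fintype.card {v : Γ // v ∈ B} ≤ Fintype.card Γ :=
      Fintype.card_subtype_le _
    omega
  rw [Nat.card_eq_fintype_card]
  omega
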